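/- Let {n_j} and {m_j} be sequences of integers, and let {τ_j} be a sequence of complex numbers converging to a complex number τ with non-zero imaginary part. If the sequence {n_j + m_j τ_j} converges in ℂ, then both {n_j} and {m_j} are eventually constant. -/

import Mathlib

open scoped Pointwise Topology LinearAlgebra.Projectivization
open Filter Matrix

set_option maxHeartbeats 800000
set_option synthInstance.maxHeartbeats 400000

noncomputable section

/-- `SL(2,ℂ)`. -/
abbrev SL2C := Matrix.SpecialLinearGroup (Fin 2) ℂ

instance : TopologicalSpace SL2C := instTopologicalSpaceSubtype

/-- `PSL(2,ℂ)`, the quotient of `SL(2,ℂ)` by its center `{±I}`. -/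
abbrev PSL2 := SL2C ⧸ Subgroup.center SL2C

/-- The Riemann sphere, realized as the complex projective line. -/
abbrev RSphere := ℙ ℂ (Fin 2 → ℂ)

instance : TopologicalSpace RSphere :=
  inferInstanceAs (TopologicalSpace (Quotient (projectivizationSetoid ℂ (Fin 2 → ℂ))))

/-- The action of `SL(2,ℂ)` on the Riemann sphere by Möbius transformations. -/
instance SL2C.mulActionRSphere : MulAction SL2C RSphere where
  smul A := Projectivization.map (Matrix.SpecialLinearGroup.toLin' A).toLinearMap
    (Matrix.SpecialLinearGroup.toLin' A).injective
  one_smul x := by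
    induction x using Projectivization.ind with
    | h v hv =>
      show Projectivization.map _ _ _ = _
      rw [Projectivization.map_mk]
      simp
  mul_smul A B x := by
    induction x using Projectivization.ind with
    | h v hv =>
      show Projectivization.map _ _ _ =
        Projectivization.map _ _ (Projectivization.map _ _ _)
      rw [Projectivization.map_mk, Projectivization.map_mk, Projectivization.map_mk]
      simp

lemma SL2C.center_smul_eq (A : SL2C) (hA : A ∈ Subgroup.center SL2C) (x : RSphere) :
    A • x = x := by
  obtain ⟨r, hr, hrA⟩ := Matrix.SpecialLinearGroup.mem_center_iff.mp hA
  induction x using Projectivization.ind with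
  | h v hv =>
    show Projectivization.map _ _ _ = _
    rw [Projectivization.map_mk]
    have hr0 : r ≠ 0 := by
      intro h; rw [h] at hr; simpa using hr
    rw [Projectivization.mk_eq_mk_iff']
    refine ⟨r, ?_⟩
    have : (Matrix.SpecialLinearGroup.toLin' A).toLinearMap v
        = (A : Matrix (Fin 2) (Fin 2) ℂ) *ᵥ v := by
      simp [Matrix.SpecialLinearGroup.toLin'_apply, Matrix.toLin'_apply]
    rw [this, ← hrA]
    show r • v = (Matrix.scalar (Fin 2) r) *ᵥ v
    funext i
    simp [Matrix.scalar_apply, Matrix.mulVec_diagonal]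

end

noncomputable section

/-- The action of `PSL(2,ℂ)` on the Riemann sphere, descended from that of `SL(2,ℂ)`. -/
def mobiusPerm : PSL2 →* Equiv.Perm RSphere :=
  QuotientGroup.lift (Subgroup.center SL2C) (MulAction.toPermHom SL2C RSphere)
    (by
      intro A hA
      ext x
      simpa using SL2C.center_smul_eq A hA x)

/-- Elements of `PSL(2,ℂ)` act on the Riemann sphere as Möbius transformations. -/
instance PSL2.mulActionRSphere : MulAction PSL2 RSphere where
  smul γ x := mobiusPerm γ x
  one_smul x := by
    show mobiusPerm 1 x = x
    simp
  mul_smul a b x := by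
    show mobiusPerm (a * b) x = mobiusPerm a (mobiusPerm b x)
    simp

end

noncomputable section

/-- A Möbius transformation is parabolic if it is not the identity and has exactly one
fixed point on the Riemann sphere. -/
def IsParabolic (γ : PSL2) : Prop :=
  γ ≠ 1 ∧ ∃! z : RSphere, γ • z = z

/-- The `PSL(2,ℂ)`-element corresponding to `z ↦ μ² z` (represented by the diagonal
matrix with entries `μ, μ⁻¹`). -/
def dilation (μ : ℂˣ) : PSL2 :=
  QuotientGroup.mk (⟨!![(μ : ℂ), 0; 0, ((μ⁻¹ : ℂˣ) : ℂ)], by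
    simp [Matrix.det_fin_two_of]⟩ : SL2C)

/-- A Möbius transformation is loxodromic if it is conjugate in `PSL(2,ℂ)` to `z ↦ λ z`
for some `λ ≠ 0` with `|λ| ≠ 1`.  (Every such `λ` is of the form `μ²` for a unit `μ`.) -/
def IsLoxodromic (γ : PSL2) : Prop :=
  ∃ μ : ℂˣ, ‖((μ : ℂ) ^ 2)‖ ≠ 1 ∧ ∃ β : PSL2, β * γ * β⁻¹ = dilation μ

/-- A representation is discrete and faithful if it is injective with discrete image. -/
def IsDiscreteFaithful {G : Type*} [Group G] (ρ : G →* PSL2) : Prop :=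
  Function.Injective ρ ∧ DiscreteTopology ρ.range

/-- Algebraic convergence of a sequence of representations. -/
def ConvergesAlgebraically {G : Type*} [Group G] (ρs : ℕ → G →* PSL2) (ρ : G →* PSL2) : Prop :=
  ∀ g : G, Tendsto (fun j => ρs j g) atTop (𝓝 (ρ g))

/-- A sequence of representations with algebraic limit `ρ` is type-preserving if `ρs j g` is
parabolic exactly when `ρ g` is. -/
def TypePreserving {G : Type*} [Group G] (ρs : ℕ → G →* PSL2) (ρ : G →* PSL2) : Prop :=
  ∀ (j : ℕ) (g : G), IsParabolic (ρs j g) ↔ IsParabolic (ρ g)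

/-- Geometric convergence of a sequence of subgroups of `PSL(2,ℂ)`: every element of the limit
is a limit of elements of the approximates, and every accumulation point of a sequence of
elements of the approximates lies in the limit. -/
def GeometricallyConvergesTo (Γs : ℕ → Subgroup PSL2) (Γ : Subgroup PSL2) : Prop :=
  (∀ γ ∈ Γ, ∃ s : ℕ → PSL2, (∀ j, s j ∈ Γs j) ∧ Tendsto s atTop (𝓝 γ)) ∧
  (∀ s : ℕ → PSL2, (∀ j, s j ∈ Γs j) → ∀ γ : PSL2, MapClusterPt γ atTop s → γ ∈ Γ)

/-- Strong convergence: algebraic convergence together with geometric convergence of the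
images. -/
def ConvergesStrongly {G : Type*} [Group G] (ρs : ℕ → G →* PSL2) (ρ : G →* PSL2) : Prop :=
  ConvergesAlgebraically ρs ρ ∧ GeometricallyConvergesTo (fun j => (ρs j).range) ρ.range

/-- Hausdorff convergence of a sequence of (closed) subsets of the Riemann sphere. -/
def HausdorffConvergesTo (Xs : ℕ → Set RSphere) (X : Set RSphere) : Prop :=
  (∀ x ∈ X, ∃ s : ℕ → RSphere, (∀ j, s j ∈ Xs j) ∧ Tendsto s atTop (𝓝 x)) ∧
  (∀ s : ℕ → RSphere, (∀ j, s j ∈ Xs j) → ∀ x : RSphere, MapClusterPt x atTop s → x ∈ X)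

/-- A group of Möbius transformations acts properly discontinuously on an open set `U` if for
every compact `K ⊆ U` only finitely many group elements carry `K` to a set meeting `K`. -/
def ProperlyDiscontinuousOn (Γ : Subgroup PSL2) (U : Set RSphere) : Prop :=
  ∀ K : Set RSphere, K ⊆ U → IsCompact K →
    {γ : PSL2 | γ ∈ Γ ∧ ((γ • K) ∩ K).Nonempty}.Finite

/-- The domain of discontinuity: the largest open set on which `Γ` acts properly
discontinuously. -/
def domainOfDiscontinuity (Γ : Subgroup PSL2) : Set RSphere :=
  ⋃₀ {U : Set RSphere | IsOpen U ∧ ProperlyDiscontinuousOn Γ U}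

/-- The limit set: the complement of the domain of discontinuity. -/
def limitSet (Γ : Subgroup PSL2) : Set RSphere :=
  (domainOfDiscontinuity Γ)ᶜ

/-- The connected components of a subset of the Riemann sphere. -/
def componentsOf (S : Set RSphere) : Set (Set RSphere) :=
  {Δ : Set RSphere | ∃ z ∈ S, Δ = connectedComponentIn S z}

/-- The component subgroup of `Γ` associated to `Δ`: the stabilizer of `Δ` in `Γ`. -/
def componentSubgroup (Γ : Subgroup PSL2) (Δ : Set RSphere) : Subgroup PSL2 :=
  Γ ⊓ MulAction.stabilizer PSL2 Δ

/-- `Φ` is a component subgroup of `Γ` if it is the stabilizer in `Γ` of a connected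
component of the domain of discontinuity of `Γ`. -/
def IsComponentSubgroup (Γ Φ : Subgroup PSL2) : Prop :=
  ∃ Δ ∈ componentsOf (domainOfDiscontinuity Γ), Φ = componentSubgroup Γ Δ

/-- A Jordan curve in the Riemann sphere: the image of a continuous injection of the circle. -/
def IsJordanCurve (C : Set RSphere) : Prop :=
  ∃ f : Circle → RSphere, Continuous f ∧ Function.Injective f ∧ Set.range f = C

/-- `γ` interchanges two distinct components of the domain of discontinuity of `Γ`. -/
def SwapsComponents (Γ : Subgroup PSL2) (γ : PSL2) : Prop :=
  ∃ Δ₁ ∈ componentsOf (domainOfDiscontinuity Γ),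
    ∃ Δ₂ ∈ componentsOf (domainOfDiscontinuity Γ),
      Δ₁ ≠ Δ₂ ∧ γ • Δ₁ = Δ₂ ∧ γ • Δ₂ = Δ₁

/-- A quasifuchsian group: a finitely generated Kleinian group whose limit set is a Jordan
curve, containing no element interchanging the two components of its domain of
discontinuity. -/
def IsQuasifuchsian (Γ : Subgroup PSL2) : Prop :=
  Group.FG Γ ∧ DiscreteTopology Γ ∧ IsJordanCurve (limitSet Γ) ∧
    ¬ ∃ γ ∈ Γ, SwapsComponents Γ γ

/-- An extended quasifuchsian group: as above, but containing an element interchanging the two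
components of its domain of discontinuity. -/
def IsExtendedQuasifuchsian (Γ : Subgroup PSL2) : Prop :=
  Group.FG Γ ∧ DiscreteTopology Γ ∧ IsJordanCurve (limitSet Γ) ∧
    ∃ γ ∈ Γ, SwapsComponents Γ γ

/-- A web group: a finitely generated Kleinian group whose domain of discontinuity has
infinitely many components, all of whose component subgroups are quasifuchsian. -/
def IsWebGroup (Γ : Subgroup PSL2) : Prop :=
  Group.FG Γ ∧ DiscreteTopology Γ ∧
    (componentsOf (domainOfDiscontinuity Γ)).Infinite ∧
    ∀ Δ ∈ componentsOf (domainOfDiscontinuity Γ), IsQuasifuchsian (componentSubgroup Γ Δ)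

/-- A generalized web group is quasifuchsian, extended quasifuchsian or web. -/
def IsGeneralizedWebGroup (Γ : Subgroup PSL2) : Prop :=
  IsQuasifuchsian Γ ∨ IsExtendedQuasifuchsian Γ ∨ IsWebGroup Γ

/-- `X` is precisely invariant under `Φ` in `Γ` if `Φ` is the stabilizer of `X` in `Γ` and
no element of `Γ ∖ Φ` carries `X` to a set meeting `X`. -/
def PreciselyInvariant (Γ Φ : Subgroup PSL2) (X : Set RSphere) : Prop :=
  Φ ≤ Γ ∧ (∀ γ ∈ Γ, (γ • X = X ↔ γ ∈ Φ)) ∧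
    ∀ γ ∈ Γ, γ ∉ Φ → Disjoint (γ • X) X

/-- `γ` is primitive in `Γ`: it is not a power `δ^n` with `δ ∈ Γ` and `|n| ≥ 2`. -/
def IsPrimitiveIn (Γ : Subgroup PSL2) (γ : PSL2) : Prop :=
  ¬ ∃ δ ∈ Γ, ∃ n : ℤ, 2 ≤ |n| ∧ δ ^ n = γ

/-- A closed Jordan domain: the closure of a connected component of the complement of a
Jordan curve. -/
def IsClosedJordanDomain (D : Set RSphere) : Prop :=
  ∃ C : Set RSphere, IsJordanCurve C ∧
    ∃ z ∈ Cᶜ, D = closure (connectedComponentIn Cᶜ z)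

/-- A cusp region for a parabolic `γ ∈ Γ`: a closed Jordan domain, precisely invariant under
`⟨γ⟩` in `Γ`, meeting the limit set exactly in the fixed point of `γ`. -/
def IsCuspRegion (Γ : Subgroup PSL2) (γ : PSL2) (D : Set RSphere) : Prop :=
  IsClosedJordanDomain D ∧ PreciselyInvariant Γ (Subgroup.zpowers γ) D ∧
    D ∩ limitSet Γ = {z : RSphere | γ • z = z}

/-- The cusp region `D` for the primitive parabolic `ρ h` persists in the approximates:
whenever the sequence is normalized about `ρ h` by conjugating by Möbius transformations
`β j → 1` with `β j * ρs j h * (β j)⁻¹ = ρ h`, `D` is a cusp region for `ρ h` in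
`β j • ρs j (G) • (β j)⁻¹` for all sufficiently large `j`. -/
def PersistsInApproximates {G : Type*} [Group G] (ρs : ℕ → G →* PSL2) (ρ : G →* PSL2)
    (h : G) (D : Set RSphere) : Prop :=
  ∀ β : ℕ → PSL2, Tendsto β atTop (𝓝 1) → (∀ j, β j * ρs j h * (β j)⁻¹ = ρ h) →
    ∀ᶠ j in atTop,
      IsCuspRegion (Subgroup.map (MulAut.conj (β j)).toMonoidHom (ρs j).range) (ρ h) D

/-- A degenerate group: a finitely generated Kleinian group whose domain of discontinuity
and limit set are both non-empty and connected. -/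
def IsDegenerate (Γ : Subgroup PSL2) : Prop :=
  Group.FG Γ ∧ DiscreteTopology Γ ∧ IsConnected (domainOfDiscontinuity Γ) ∧
    IsConnected (limitSet Γ)

/-- A degenerate group without accidental parabolics: every primitive parabolic element
stabilizing a component `Δ` of the domain of discontinuity has a cusp region contained
(off the limit set) in `Δ`. -/
def IsDegenerateWithoutAccidentalParabolics (Γ : Subgroup PSL2) : Prop :=
  IsDegenerate Γ ∧
    ∀ γ ∈ Γ, IsParabolic γ → IsPrimitiveIn Γ γ →
      ∀ Δ ∈ componentsOf (domainOfDiscontinuity Γ), γ • Δ = Δ →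
        ∃ D : Set RSphere, IsCuspRegion Γ γ D ∧ D \ limitSet Γ ⊆ Δ

/-- An elementary group: the limit set contains at most two points. -/
def IsElementary (Γ : Subgroup PSL2) : Prop :=
  ∀ x ∈ limitSet Γ, ∀ y ∈ limitSet Γ, ∀ z ∈ limitSet Γ, x = y ∨ x = z ∨ y = z

/-- A fundamental domain for `Γ`: an open subset of the domain of discontinuity, disjoint
from all its translates by non-trivial elements of `Γ`, whose closure meets every
`Γ`-orbit in the domain of discontinuity. -/
def IsFundamentalDomain (Γ : Subgroup PSL2) (D : Set RSphere) : Prop :=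
  IsOpen D ∧ D ⊆ domainOfDiscontinuity Γ ∧
    (∀ γ ∈ Γ, γ ≠ 1 → Disjoint (γ • D) D) ∧
    ∀ z ∈ domainOfDiscontinuity Γ, ∃ γ ∈ Γ, γ • z ∈ closure D

/-- A group is virtually abelian if it has an abelian subgroup of finite index. -/
def VirtuallyAbelian (G : Type*) [Group G] : Prop :=
  ∃ H : Subgroup G, H.FiniteIndex ∧ ∀ a ∈ H, ∀ b ∈ H, a * b = b * a

open scoped commutatorElement

/-- The relator `[a₁,b₁]⋯[a_g,b_g]` of the genus-`g` surface group, in the free group on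
generators `aᵢ = (i, true)`, `bᵢ = (i, false)`. -/
def surfaceRelator (g : ℕ) : FreeGroup (Fin g × Bool) :=
  ((List.finRange g).map fun i =>
    ⁅FreeGroup.of (i, true), FreeGroup.of (i, false)⁆).prod

/-- The fundamental group of the closed orientable surface of genus `g`. -/
def SurfaceGroup (g : ℕ) : Type :=
  PresentedGroup ({surfaceRelator g} : Set (FreeGroup (Fin g × Bool)))

instance (g : ℕ) : Group (SurfaceGroup g) :=
  inferInstanceAs (Group (PresentedGroup _))

/-- An orientable surface group: a group isomorphic to the fundamental group of a closed
orientable surface of genus `g ≥ 1`. -/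
def IsSurfaceGroup (A : Type*) [Group A] : Prop :=
  ∃ g : ℕ, 1 ≤ g ∧ Nonempty (A ≃* SurfaceGroup g)

/-- `G` is a non-trivial free product of orientable surface groups and infinite cyclic
groups. -/
def IsFreeProductOfSurfaceAndCyclicGroups (G : Type*) [Group G] : Prop :=
  ∃ k : ℕ, 2 ≤ k ∧ ∃ (A : Fin k → Type) (_ : ∀ i, Group (A i)),
    (∀ i, IsSurfaceGroup (A i) ∨ Nonempty (A i ≃* Multiplicative ℤ)) ∧
    Nonempty (G ≃* Monoid.CoprodI A)

end

noncomputable section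

/-- The two-element family of subgroups `G₁`, `G₂`. -/
def amalgFamily {G : Type*} [Group G] (G₁ G₂ : Subgroup G) : Bool → Subgroup G
  | true => G₁
  | false => G₂

/-- The inclusions of `⟨h⟩` into `G₁` and `G₂`. -/
def amalgIncl {G : Type*} [Group G] {G₁ G₂ : Subgroup G} {h : G}
    (h1 : Subgroup.zpowers h ≤ G₁) (h2 : Subgroup.zpowers h ≤ G₂) :
    ∀ i : Bool, ↥(Subgroup.zpowers h) →* ↥(amalgFamily G₁ G₂ i)
  | true => Subgroup.inclusion h1
  | false => Subgroup.inclusion h2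

/-- The natural homomorphism from the amalgamated free product `G₁ *_{⟨h⟩} G₂` to `G`. -/
def amalgamatedToGroup {G : Type*} [Group G] {G₁ G₂ : Subgroup G} {h : G}
    (h1 : Subgroup.zpowers h ≤ G₁) (h2 : Subgroup.zpowers h ≤ G₂) :
    Monoid.PushoutI (amalgIncl h1 h2) →* G :=
  Monoid.PushoutI.lift (fun i => (amalgFamily G₁ G₂ i).subtype)
    (Subgroup.zpowers h).subtype
    (by intro i; cases i <;> (ext x; rfl))

end

/-! For large `j` the numbers `1, τ_j` form an `ℝ`-basis of `ℂ`, and the coordinates of a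
point in this basis depend continuously on `τ_j` because `Im τ ≠ 0`. Hence `n_j` and `m_j`
converge as real numbers, and `ℤ` is closed and discrete in `ℝ`. -/

theorem Int.exists_eventually_eq_of_tendsto_cast {α : Type*} {l : Filter α} [l.NeBot]
    {f : α → ℤ} {c : ℝ} (h : Tendsto (fun j => (f j : ℝ)) l (𝓝 c)) :
    ∃ b : ℤ, ∀ᶠ j in l, f j = b := by
  obtain ⟨b, rfl⟩ : c ∈ Set.range ((↑) : ℤ → ℝ) :=
    Int.isClosedEmbedding_coe_real.isClosed_range.mem_of_tendsto h
      (.of_forall fun j => ⟨f j, rfl⟩)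
  have hf : Tendsto f l (𝓝 b) := Int.isClosedEmbedding_coe_real.tendsto_nhds_iff.mpr h
  exact ⟨b, by simpa only [nhds_discrete, tendsto_pure] using hf⟩

theorem Complex.tendsto_coords_of_tendsto_add_mul {α : Type*} {l : Filter α} {x y : α → ℝ}
    {τs : α → ℂ} {τ w : ℂ} (hτ : τ.im ≠ 0) (hτs : Tendsto τs l (𝓝 τ))
    (h : Tendsto (fun j => (x j : ℂ) + y j * τs j) l (𝓝 w)) :
    Tendsto x l (𝓝 (w.re - w.im / τ.im * τ.re)) ∧ Tendsto y l (𝓝 (w.im / τ.im)) := by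
  have hre := (Complex.continuous_re.tendsto w).comp h
  have him := (Complex.continuous_im.tendsto w).comp h
  have hτre := (Complex.continuous_re.tendsto τ).comp hτs
  have hτim := (Complex.continuous_im.tendsto τ).comp hτs
  have hy : Tendsto y l (𝓝 (w.im / τ.im)) := by
    refine (him.div hτim hτ).congr' ?_
    filter_upwards [hτim.eventually_ne hτ] with j hj
    simp only [Function.comp_apply] at hj ⊢
    simp [hj]
  refine ⟨(hre.sub (hy.mul hτre)).congr fun j => ?_, hy⟩
  simp

/-- if `n_j + m_j τ_j` converges, with `n_j, m_j` integers and `τ_j → τ`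
with `τ` non-real, then `n_j` and `m_j` are eventually constant. -/
theorem eventually_constant_of_lattice_convergence
    (n m : ℕ → ℤ) (τs : ℕ → ℂ) (τ : ℂ) (hτ : τ.im ≠ 0)
    (hτconv : Filter.Tendsto τs Filter.atTop (nhds τ))
    (hconv : ∃ w : ℂ, Filter.Tendsto (fun j => (n j : ℂ) + (m j : ℂ) * τs j)
      Filter.atTop (nhds w)) :
    (∃ a : ℤ, ∀ᶠ j in Filter.atTop, n j = a) ∧
    (∃ b : ℤ, ∀ᶠ j in Filter.atTop, m j = b) := by
  obtain ⟨w, hw⟩ := hconv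
  have hw' : Tendsto (fun j => ((n j : ℝ) : ℂ) + ((m j : ℝ) : ℂ) * τs j) atTop (𝓝 w) := by
    simpa only [Complex.ofReal_intCast] using hw
  obtain ⟨hn, hm⟩ := Complex.tendsto_coords_of_tendsto_add_mul hτ hτconv hw'
  exact ⟨Int.exists_eventually_eq_of_tendsto_cast hn,
    Int.exists_eventually_eq_of_tendsto_cast hm⟩
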